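/- arXiv:2505.22941 — 2 statements merged into one kernel-verified Lean document; each statement's English description precedes it below -/
import Mathlib

section
/- Let C be a z_0-unsolvable configuration on the Flower snark J_3, and let A = {x_0, x_1, x_{−1}} and B = {y_0, y_1, y_{−1}}. Then C(A ∪ B) ≤ 6, where C(S) denotes the total number of pebbles on the vertices of S. -/
/-- A pebbling move on the graph `G`: remove two pebbles from a vertex `u`
(which has at least two pebbles) and add one pebble to a neighbor `v` of `u`. -/
def PebblingMove {V : Type} [DecidableEq V] (G : SimpleGraph V) (C C' : V → ℕ) : Prop :=
  ∃ u v, G.Adj u v ∧ 2 ≤ C u ∧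
    C' = fun w => if w = u then C u - 2 else if w = v then C v + 1 else C w

/-- A configuration `C` is `r`-solvable if some (possibly empty) sequence of
pebbling moves starting from `C` produces a configuration with at least one
pebble on `r`. -/
def PebblingSolvable {V : Type} [DecidableEq V] (G : SimpleGraph V) (C : V → ℕ) (r : V) : Prop :=
  ∃ C' : V → ℕ, Relation.ReflTransGen (PebblingMove G) C C' ∧ 1 ≤ C' r

/-- The pebbling number of `G`: the least `t` such that for every target
vertex `r`, every configuration of size `t` is `r`-solvable. -/
noncomputable def pebblingNumber {V : Type} [DecidableEq V] [Fintype V] (G : SimpleGraph V) : ℕ :=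
  sInf {t : ℕ | ∀ (r : V) (C : V → ℕ), (∑ v, C v) = t → PebblingSolvable G C r}

/-- The 12 vertices of the Flower snark `J₃`; `vm` denotes `v_{-1}`,
`xm` denotes `x_{-1}`, etc. -/
inductive J3V : Type
  | v0 | v1 | vm | x0 | x1 | xm | y0 | y1 | ym | z0 | z1 | zm
  deriving DecidableEq

instance : Fintype J3V where
  elems := {J3V.v0, J3V.v1, J3V.vm, J3V.x0, J3V.x1, J3V.xm,
    J3V.y0, J3V.y1, J3V.ym, J3V.z0, J3V.z1, J3V.zm}
  complete := by intro x; cases x <;> decide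

open J3V in
/-- The Flower snark `J₃` (Tietze's graph), with its 18 edges. -/
def J3 : SimpleGraph J3V := SimpleGraph.fromEdgeSet
  ({s(z0, v0), s(z0, x0), s(z0, y0), s(v0, v1), s(v0, vm),
    s(x0, x1), s(x0, xm), s(y0, y1), s(y0, ym), s(v1, vm),
    s(v1, z1), s(vm, zm), s(x1, z1), s(y1, z1), s(xm, zm),
    s(ym, zm), s(xm, y1), s(x1, ym)} : Set (Sym2 J3V))


/-! In `J₃` the six vertices of `A ∪ B` induce the hexagon `x₀ x₁ y₋₁ y₀ y₁ x₋₁`, and `z₀` is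
adjacent to its two antipodal vertices `x₀` and `y₀`. Seven pebbles on this hexagon can always
put two pebbles on `x₀` or on `y₀` within three moves out of `x₁, x₋₁, y₁, y₋₁`, a finite check;
since extra pebbles never hurt, more than six pebbles on `A ∪ B` make `z₀` reachable. -/

section Pebbling

variable {V : Type} [DecidableEq V] {G : SimpleGraph V} {C C' D D' : V → ℕ} {r : V}

theorem PebblingSolvable.of_pebblingMove (hm : PebblingMove G C C')
    (hs : PebblingSolvable G C' r) : PebblingSolvable G C r :=
  let ⟨D, hD, hr⟩ := hs
  ⟨D, hD.head hm, hr⟩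

theorem PebblingSolvable.of_adj {u : V} (hadj : G.Adj u r) (hu : 2 ≤ C u) :
    PebblingSolvable G C r :=
  .of_pebblingMove ⟨u, r, hadj, hu, rfl⟩ ⟨_, .refl, by simp [hadj.ne.symm]⟩

theorem PebblingMove.exists_le_of_le (hm : PebblingMove G D D') (hle : D ≤ C) :
    ∃ C', PebblingMove G C C' ∧ D' ≤ C' := by
  obtain ⟨u, v, hadj, hu, rfl⟩ := hm
  refine ⟨_, ⟨u, v, hadj, hu.trans (hle u), rfl⟩, fun w => ?_⟩
  have hDu : D u ≤ C u := hle u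
  have hDv : D v ≤ C v := hle v
  have hDw : D w ≤ C w := hle w
  dsimp only
  split_ifs <;> omega

theorem PebblingMove.exists_reflTransGen_le_of_le
    (hm : Relation.ReflTransGen (PebblingMove G) D D') (hle : D ≤ C) :
    ∃ C', Relation.ReflTransGen (PebblingMove G) C C' ∧ D' ≤ C' := by
  induction hm with
  | refl => exact ⟨C, .refl, hle⟩
  | tail _ hstep ih =>
    obtain ⟨C₁, hC₁, hle₁⟩ := ih
    obtain ⟨C₂, hC₂, hle₂⟩ := hstep.exists_le_of_le hle₁
    exact ⟨C₂, hC₁.tail hC₂, hle₂⟩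

theorem PebblingSolvable.mono (hs : PebblingSolvable G D r) (hle : D ≤ C) :
    PebblingSolvable G C r :=
  let ⟨_, hD, hr⟩ := hs
  let ⟨C', hC', hle'⟩ := PebblingMove.exists_reflTransGen_le_of_le hD hle
  ⟨C', hC', hr.trans (hle' r)⟩

end Pebbling

namespace J3

open J3V

abbrev HexConfig := ℕ × ℕ × ℕ × ℕ × ℕ × ℕ

def HexConfig.toConfig : HexConfig → J3V → ℕ
  | (a₀, a₁, aₘ, b₀, b₁, bₘ) => fun
    | x0 => a₀ | x1 => a₁ | xm => aₘ | y0 => b₀ | y1 => b₁ | ym => bₘ | _ => 0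

def HexConfig.moves : HexConfig → List HexConfig
  | (a₀, a₁, aₘ, b₀, b₁, bₘ) =>
    (if 2 ≤ a₁ then [(a₀ + 1, a₁ - 2, aₘ, b₀, b₁, bₘ), (a₀, a₁ - 2, aₘ, b₀, b₁, bₘ + 1)] else []) ++
    (if 2 ≤ aₘ then [(a₀ + 1, a₁, aₘ - 2, b₀, b₁, bₘ), (a₀, a₁, aₘ - 2, b₀, b₁ + 1, bₘ)] else []) ++
    (if 2 ≤ b₁ then [(a₀, a₁, aₘ, b₀ + 1, b₁ - 2, bₘ), (a₀, a₁, aₘ + 1, b₀, b₁ - 2, bₘ)] else []) ++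
    (if 2 ≤ bₘ then [(a₀, a₁, aₘ, b₀ + 1, b₁, bₘ - 2), (a₀, a₁ + 1, aₘ, b₀, b₁, bₘ - 2)] else [])

def HexConfig.twoNextToZ0 : HexConfig → Bool
  | (a₀, _, _, b₀, _, _) => 2 ≤ a₀ || 2 ≤ b₀

def HexConfig.reachesZ0Within : ℕ → HexConfig → Bool
  | 0, s => s.twoNextToZ0
  | n + 1, s => s.twoNextToZ0 || s.moves.any (reachesZ0Within n)

theorem pebblingMove_toConfig_of_mem_moves {s t : HexConfig} (h : t ∈ s.moves) :
    PebblingMove J3 s.toConfig t.toConfig := by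
  obtain ⟨a₀, a₁, aₘ, b₀, b₁, bₘ⟩ := s
  simp only [HexConfig.moves, List.mem_append, List.mem_ite_nil_right, List.mem_cons,
    List.not_mem_nil, or_false] at h
  rcases h with (((⟨h, rfl | rfl⟩ | ⟨h, rfl | rfl⟩) | ⟨h, rfl | rfl⟩) | ⟨h, rfl | rfl⟩)
  · exact ⟨x1, x0, by simp [J3], h, by funext w; cases w <;> rfl⟩
  · exact ⟨x1, ym, by simp [J3], h, by funext w; cases w <;> rfl⟩
  · exact ⟨xm, x0, by simp [J3], h, by funext w; cases w <;> rfl⟩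
  · exact ⟨xm, y1, by simp [J3], h, by funext w; cases w <;> rfl⟩
  · exact ⟨y1, y0, by simp [J3], h, by funext w; cases w <;> rfl⟩
  · exact ⟨y1, xm, by simp [J3], h, by funext w; cases w <;> rfl⟩
  · exact ⟨ym, y0, by simp [J3], h, by funext w; cases w <;> rfl⟩
  · exact ⟨ym, x1, by simp [J3], h, by funext w; cases w <;> rfl⟩

theorem pebblingSolvable_of_twoNextToZ0 {s : HexConfig}
    (h : s.twoNextToZ0 = true) : PebblingSolvable J3 s.toConfig z0 := by
  obtain ⟨a₀, a₁, aₘ, b₀, b₁, bₘ⟩ := s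
  simp only [HexConfig.twoNextToZ0, Bool.or_eq_true, decide_eq_true_eq] at h
  rcases h with h | h
  · exact .of_adj (u := x0) (by simp [J3]) h
  · exact .of_adj (u := y0) (by simp [J3]) h

theorem pebblingSolvable_of_reachesZ0Within {n : ℕ} {s : HexConfig}
    (h : s.reachesZ0Within n = true) : PebblingSolvable J3 s.toConfig z0 := by
  induction n generalizing s with
  | zero => exact pebblingSolvable_of_twoNextToZ0 h
  | succ n ih =>
    simp only [HexConfig.reachesZ0Within, Bool.or_eq_true, List.any_eq_true] at h
    rcases h with h | ⟨t, ht, hreach⟩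
    · exact pebblingSolvable_of_twoNextToZ0 h
    · exact (ih hreach).of_pebblingMove (pebblingMove_toConfig_of_mem_moves ht)

theorem reachesZ0Within_three_of_sum_eq_seven :
    ∀ a₀ < 8, ∀ a₁ < 8 - a₀, ∀ aₘ < 8 - a₀ - a₁, ∀ b₀ < 8 - a₀ - a₁ - aₘ,
      ∀ b₁ < 8 - a₀ - a₁ - aₘ - b₀,
        HexConfig.reachesZ0Within 3 (a₀, a₁, aₘ, b₀, b₁, 7 - a₀ - a₁ - aₘ - b₀ - b₁) := by
  decide

theorem pebblingSolvable_z0_of_seven_le {C : J3V → ℕ}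
    (h : 7 ≤ C x0 + C x1 + C xm + C y0 + C y1 + C ym) : PebblingSolvable J3 C z0 := by
  -- keep seven of the pebbles on the hexagon, taken greedily in the order of `toConfig`
  set a₀ := min (C x0) 7
  set a₁ := min (C x1) (7 - a₀)
  set aₘ := min (C xm) (7 - a₀ - a₁)
  set b₀ := min (C y0) (7 - a₀ - a₁ - aₘ)
  set b₁ := min (C y1) (7 - a₀ - a₁ - aₘ - b₀)
  have hreach := reachesZ0Within_three_of_sum_eq_seven a₀ (by omega) a₁ (by omega) aₘ (by omega)
    b₀ (by omega) b₁ (by omega)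
  refine (pebblingSolvable_of_reachesZ0Within hreach).mono fun v => ?_
  cases v <;> simp only [HexConfig.toConfig] <;> omega

end J3

/-- For a `z₀`-unsolvable configuration `C` on `J₃`, the union
`A ∪ B = {x₀, x₁, x₋₁} ∪ {y₀, y₁, y₋₁}` carries at most 6 pebbles. -/
theorem J3_z0_unsolvable_AB (C : J3V → ℕ)
    (h : ¬ PebblingSolvable J3 C J3V.z0) :
    (∑ v ∈ (({J3V.x0, J3V.x1, J3V.xm} ∪ {J3V.y0, J3V.y1, J3V.ym}) : Finset J3V), C v) ≤ 6 := by
  by_contra! hlarge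
  refine h (J3.pebblingSolvable_z0_of_seven_le ?_)
  simp only [Finset.insert_union, Finset.singleton_union, Finset.sum_insert, Finset.mem_insert,
    Finset.mem_singleton, reduceCtorEq, or_self, not_false_eq_true, Finset.sum_singleton] at hlarge
  omega
end

section
/- Let C be an x_0-unsolvable configuration on the Flower snark J_3, and let E = {z_0, v_0, y_0} and F = {v_1, v_{−1}}. Then C(F) + 2·C(E) ≤ 10, where C(S) denotes the total number of pebbles on the vertices of S. -/
/-!
Two pebbles on `z₀` solve `x₀`. Moving pebbles greedily along `v₁ → v₀`, `v₋₁ → v₀`, `v₀ → z₀`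
and `y₀ → z₀` gathers `C z₀ + ⌊C y₀ / 2⌋ + ⌊(C v₀ + ⌊C v₁ / 2⌋ + ⌊C v₋₁ / 2⌋) / 2⌋` pebbles
on `z₀`, and this is at least `2` as soon as `C(F) + 2·C(E) ≥ 11`.
-/

section Pebbling

variable {V : Type} [DecidableEq V] {G : SimpleGraph V}

/-- The result of `k` pebbling moves from `u` to `v`; meaningful only when `2 * k ≤ C u`. -/
def pebblingTransfer (C : V → ℕ) (u v : V) (k : ℕ) : V → ℕ :=
  fun w => if w = u then C u - 2 * k else if w = v then C v + k else C w

theorem reflTransGen_pebblingTransfer {C : V → ℕ} {u v : V} {k : ℕ} (huv : G.Adj u v)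
    (hk : 2 * k ≤ C u) : Relation.ReflTransGen (PebblingMove G) C (pebblingTransfer C u v k) := by
  induction k with
  | zero =>
    convert Relation.ReflTransGen.refl using 1
    funext w
    unfold pebblingTransfer
    split_ifs <;> simp_all
  | succ k ih =>
    refine (ih (by omega)).tail ⟨u, v, huv, by simp [pebblingTransfer]; omega, ?_⟩
    funext w
    unfold pebblingTransfer
    split_ifs <;> simp_all <;> omega

theorem PebblingSolvable.of_reflTransGen {C C' : V → ℕ} {r : V}
    (hC : Relation.ReflTransGen (PebblingMove G) C C') (h : PebblingSolvable G C' r) :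
    PebblingSolvable G C r :=
  let ⟨D, hD, hr⟩ := h
  ⟨D, hC.trans hD, hr⟩

theorem PebblingSolvable.of_pebblingTransfer {C : V → ℕ} {u v r : V} {k : ℕ} (huv : G.Adj u v)
    (hk : 2 * k ≤ C u) (h : PebblingSolvable G (pebblingTransfer C u v k) r) :
    PebblingSolvable G C r :=
  h.of_reflTransGen (reflTransGen_pebblingTransfer huv hk)

theorem pebblingSolvable_of_adj {C : V → ℕ} {u r : V} (hur : G.Adj u r) (hu : 2 ≤ C u) :
    PebblingSolvable G C r :=
  ⟨_, reflTransGen_pebblingTransfer hur (k := 1) hu, by simp [pebblingTransfer, hur.ne']⟩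

end Pebbling

open J3V

theorem J3_x0_solvable_of_two_le (C : J3V → ℕ)
    (h : 2 ≤ C z0 + C y0 / 2 + (C v0 + C v1 / 2 + C vm / 2) / 2) :
    PebblingSolvable J3 C x0 := by
  refine .of_pebblingTransfer (u := v1) (v := v0) (k := C v1 / 2) (by simp [J3]) (by omega) ?_
  refine .of_pebblingTransfer (u := vm) (v := v0) (k := C vm / 2) (by simp [J3])
    (by simp [pebblingTransfer]; omega) ?_
  refine .of_pebblingTransfer (u := v0) (v := z0) (k := (C v0 + C v1 / 2 + C vm / 2) / 2)
    (by simp [J3]) (by simp [pebblingTransfer]; omega) ?_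
  refine .of_pebblingTransfer (u := y0) (v := z0) (k := C y0 / 2) (by simp [J3])
    (by simp [pebblingTransfer]; omega) ?_
  exact pebblingSolvable_of_adj (u := z0) (by simp [J3]) (by simp [pebblingTransfer]; omega)

/-- For an `x₀`-unsolvable configuration `C` on `J₃`, with
`E = {z₀, v₀, y₀}` and `F = {v₁, v₋₁}`, we have `C(F) + 2·C(E) ≤ 10`. -/
theorem J3_x0_unsolvable_EF (C : J3V → ℕ)
    (h : ¬ PebblingSolvable J3 C J3V.x0) :
    (∑ v ∈ ({J3V.v1, J3V.vm} : Finset J3V), C v) +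
      2 * (∑ v ∈ ({J3V.z0, J3V.v0, J3V.y0} : Finset J3V), C v) ≤ 10 := by
  by_contra hlarge
  refine h (J3_x0_solvable_of_two_le C ?_)
  simp only [Finset.sum_insert, Finset.mem_insert, Finset.mem_singleton, reduceCtorEq, or_self,
    not_false_eq_true, Finset.sum_singleton] at hlarge
  omega
end
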